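/- There exists a finite constant ρ ≥ 1, independent of Λ, such that for every finite nonzero measure Λ on [0,1] with no atoms at 0 or 1 and all integers b, m ≥ 2 with b/m ≥ 2, one has λ_b ≤ m^ρ λ_{⌈b/m⌉}. -/

import Mathlib

open MeasureTheory Finset Filter

/-- `lamBK μ b k` is `λ_{b,k} = ∫_{[0,1]} x^{k-2} (1-x)^{b-k} dΛ(x)`. -/
noncomputable def lamBK (μ : Measure ℝ) (b k : ℕ) : ℝ :=
  ∫ x in Set.Icc (0:ℝ) 1, x ^ (k - 2) * (1 - x) ^ (b - k) ∂μ

/-- `lamB μ b` is `λ_b = Σ_{k=2}^b C(b,k) λ_{b,k}`. -/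
noncomputable def lamB (μ : Measure ℝ) (b : ℕ) : ℝ :=
  ∑ k ∈ Finset.Icc 2 b, (b.choose k : ℝ) * lamBK μ b k

/-- `gamB μ b` is `γ_b = Σ_{k=2}^b C(b,k) (k-1) λ_{b,k}`. -/
noncomputable def gamB (μ : Measure ℝ) (b : ℕ) : ℝ :=
  ∑ k ∈ Finset.Icc 2 b, (b.choose k : ℝ) * ((k : ℝ) - 1) * lamBK μ b k

/-!
Write `λ_b = ∫ S_b dΛ` with `S_b(x) = ∑_{k=2}^b C(b,k) x^{k-2} (1-x)^{b-k}`. Pascal's rule gives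
`S_{b+1} = S_b + b (1-x)^{b-1}`, so `S_b(x) = ∑_{j<b} j (1-x)^{j-1}` is a `j`-weighted sum of a
nonincreasing sequence with total weight `C(b,2)`. Hence `S_b / C(b,2)` is nonincreasing in `b`,
and so is `λ_b / C(b,2)`. For `a = ⌈b/m⌉` we have `a ≤ b ≤ a m` and `C(b,2) ≤ m³ C(a,2)`, so `ρ = 3`
works.
-/

noncomputable def lamBIntegrand (b : ℕ) (x : ℝ) : ℝ :=
  ∑ k ∈ Icc 2 b, (b.choose k : ℝ) * (x ^ (k - 2) * (1 - x) ^ (b - k))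

lemma one_sub_mul_lamBIntegrand (n : ℕ) (x : ℝ) :
    (1 - x) * lamBIntegrand n x =
      ∑ k ∈ Icc 2 (n + 1), (n.choose k : ℝ) * (x ^ (k - 2) * (1 - x) ^ (n + 1 - k)) := by
  rw [lamBIntegrand, mul_sum]
  refine (sum_congr rfl fun k hk => ?_).trans
    (sum_subset (Icc_subset_Icc_right n.le_succ) fun k hk hkn => ?_)
  · rw [Nat.sub_add_comm (mem_Icc.1 hk).2, pow_succ]
    ring
  · rw [Nat.choose_eq_zero_of_lt (by grind), Nat.cast_zero, zero_mul]

lemma mul_lamBIntegrand_add (n : ℕ) (hn : 1 ≤ n) (x : ℝ) :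
    x * lamBIntegrand n x + n * (1 - x) ^ (n - 1) =
      ∑ k ∈ Icc 2 (n + 1), (n.choose (k - 1) : ℝ) * (x ^ (k - 2) * (1 - x) ^ (n + 1 - k)) := by
  rw [← insert_Icc_add_one_left_eq_Icc (by omega : 2 ≤ n + 1), sum_insert (by simp),
    ← map_add_right_Icc 2 n 1, sum_map, lamBIntegrand, mul_sum, add_comm]
  congr 1
  · simp
  · refine sum_congr rfl fun k hk => ?_
    simp only [addRightEmbedding_apply, Nat.add_sub_cancel, Nat.add_sub_add_right]
    rw [show k + 1 - 2 = k - 2 + 1 by grind, pow_succ]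
    ring

lemma lamBIntegrand_succ (n : ℕ) (x : ℝ) :
    lamBIntegrand (n + 1) x = lamBIntegrand n x + n * (1 - x) ^ (n - 1) := by
  rcases Nat.eq_zero_or_pos n with rfl | hn
  · simp [lamBIntegrand]
  have pascal : lamBIntegrand (n + 1) x =
      ∑ k ∈ Icc 2 (n + 1), (n.choose k : ℝ) * (x ^ (k - 2) * (1 - x) ^ (n + 1 - k)) +
      ∑ k ∈ Icc 2 (n + 1), (n.choose (k - 1) : ℝ) * (x ^ (k - 2) * (1 - x) ^ (n + 1 - k)) := by
    rw [lamBIntegrand, ← sum_add_distrib]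
    refine sum_congr rfl fun k hk => ?_
    obtain ⟨j, rfl⟩ : ∃ j, k = j + 1 := ⟨k - 1, by grind⟩
    rw [Nat.choose_succ_succ', Nat.add_sub_cancel, Nat.cast_add]
    ring
  rw [pascal, ← one_sub_mul_lamBIntegrand, ← mul_lamBIntegrand_add n hn]
  ring

section UnitInterval

variable {x : ℝ} (hx : x ∈ Set.Icc (0 : ℝ) 1)
include hx

lemma lamBIntegrand_term_nonneg (b k : ℕ) :
    0 ≤ (b.choose k : ℝ) * (x ^ (k - 2) * (1 - x) ^ (b - k)) := by
  have : 0 ≤ 1 - x := sub_nonneg.2 hx.2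
  have := hx.1
  positivity

lemma lamBIntegrand_nonneg (b : ℕ) : 0 ≤ lamBIntegrand b x :=
  sum_nonneg fun k _ => lamBIntegrand_term_nonneg hx b k

lemma choose_two_mul_pow_le_lamBIntegrand (n : ℕ) :
    (n.choose 2 : ℝ) * (1 - x) ^ (n - 2) ≤ lamBIntegrand n x := by
  rcases lt_or_ge n 2 with hn | hn
  · simpa [Nat.choose_eq_zero_of_lt hn] using lamBIntegrand_nonneg hx n
  simpa [lamBIntegrand] using single_le_sum (fun k _ => lamBIntegrand_term_nonneg hx n k)
    (mem_Icc.2 ⟨le_rfl, hn⟩)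

lemma choose_two_mul_lamBIntegrand_le {a b : ℕ} (hab : a ≤ b) :
    (a.choose 2 : ℝ) * lamBIntegrand b x ≤ (b.choose 2 : ℝ) * lamBIntegrand a x := by
  induction b, hab using Nat.le_induction with
  | base => rfl
  | succ n hn ih =>
    have hpow : (a.choose 2 : ℝ) * (1 - x) ^ (n - 1) ≤ lamBIntegrand a x :=
      calc (a.choose 2 : ℝ) * (1 - x) ^ (n - 1)
          ≤ (a.choose 2 : ℝ) * (1 - x) ^ (a - 2) := by
            refine mul_le_mul_of_nonneg_left ?_ (Nat.cast_nonneg _)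
            exact pow_le_pow_of_le_one (sub_nonneg.2 hx.2) (by linarith [hx.1]) (by omega)
        _ ≤ lamBIntegrand a x := choose_two_mul_pow_le_lamBIntegrand hx a
    rw [lamBIntegrand_succ, Nat.choose_succ_succ', Nat.choose_one_right]
    push_cast
    linarith [mul_le_mul_of_nonneg_left hpow n.cast_nonneg]

end UnitInterval

section Integral

variable (μ : Measure ℝ) [IsFiniteMeasure μ]

lemma integrableOn_lamBIntegrand (b : ℕ) : IntegrableOn (lamBIntegrand b) (Set.Icc 0 1) μ :=
  Continuous.integrableOn_Icc (by unfold lamBIntegrand; fun_prop)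

lemma lamB_eq_integral_lamBIntegrand (b : ℕ) :
    lamB μ b = ∫ x in Set.Icc (0 : ℝ) 1, lamBIntegrand b x ∂μ := by
  unfold lamB lamBK lamBIntegrand
  rw [integral_finsetSum _ fun k _ => ?_]
  · exact sum_congr rfl fun k _ => (integral_const_mul _ _).symm
  · refine Integrable.const_mul ?_ _
    exact Continuous.integrableOn_Icc (by fun_prop)

lemma lamB_nonneg (b : ℕ) : 0 ≤ lamB μ b := by
  rw [lamB_eq_integral_lamBIntegrand]
  exact setIntegral_nonneg measurableSet_Icc fun x hx => lamBIntegrand_nonneg hx b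

lemma choose_two_mul_lamB_le {a b : ℕ} (hab : a ≤ b) :
    (a.choose 2 : ℝ) * lamB μ b ≤ (b.choose 2 : ℝ) * lamB μ a := by
  simp only [lamB_eq_integral_lamBIntegrand, ← integral_const_mul]
  exact setIntegral_mono_on ((integrableOn_lamBIntegrand μ b).const_mul _)
    ((integrableOn_lamBIntegrand μ a).const_mul _) measurableSet_Icc
    fun x hx => choose_two_mul_lamBIntegrand_le hx hab

lemma lamB_le_mul_lamB {a b : ℕ} (ha : 2 ≤ a) (hab : a ≤ b) {c : ℝ}
    (hc : (b.choose 2 : ℝ) ≤ c * a.choose 2) : lamB μ b ≤ c * lamB μ a := by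
  have hpos : (0 : ℝ) < a.choose 2 := by exact_mod_cast Nat.choose_pos ha
  refine le_of_mul_le_mul_left ?_ hpos
  calc (a.choose 2 : ℝ) * lamB μ b ≤ b.choose 2 * lamB μ a := choose_two_mul_lamB_le μ hab
    _ ≤ c * a.choose 2 * lamB μ a := by gcongr; exact lamB_nonneg μ a
    _ = a.choose 2 * (c * lamB μ a) := by ring

end Integral

lemma choose_two_le_pow_three_mul_choose_two {a b m : ℕ} (ha : 2 ≤ a) (hb : b ≤ a * m) :
    b.choose 2 ≤ m ^ 3 * a.choose 2 := by
  refine (Nat.choose_le_choose 2 hb).trans ?_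
  rcases m.eq_zero_or_pos with rfl | hm
  · simp
  rw [← Nat.cast_le (α := ℝ)]
  push_cast [Nat.cast_choose_two]
  have ha' : (2 : ℝ) ≤ a := by exact_mod_cast ha
  have hm' : (1 : ℝ) ≤ m := by exact_mod_cast hm
  -- `m³·a(a-1) - am(am-1) = am(m-1)(ma-m-1)`
  have key : 0 ≤ (a * m : ℝ) * ((m - 1) * (m * a - m - 1)) := by
    have : (0 : ℝ) ≤ m * a - m - 1 := by nlinarith
    have : (0 : ℝ) ≤ m - 1 := by linarith
    positivity
  linarith

theorem lamB_power_law :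
    ∃ ρ : ℝ, 1 ≤ ρ ∧
      ∀ (μ : Measure ℝ), IsFiniteMeasure μ → μ {0} = 0 → μ {1} = 0 →
        μ ((Set.Icc (0:ℝ) 1)ᶜ) = 0 → 0 < μ (Set.Icc (0:ℝ) 1) →
        ∀ b m : ℕ, 2 ≤ b → 2 ≤ m → 2 ≤ (b : ℝ) / (m : ℝ) →
          lamB μ b ≤ (m : ℝ) ^ ρ * lamB μ ⌈(b : ℝ) / (m : ℝ)⌉₊ := by
  refine ⟨3, by norm_num, fun μ _ _ _ _ _ b m _ hm hbm => ?_⟩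
  have hm0 : (0 : ℝ) < m := by positivity
  set a := ⌈(b : ℝ) / m⌉₊
  have ha : 2 ≤ a := by exact_mod_cast hbm.trans (Nat.le_ceil _)
  have hab : a ≤ b :=
    Nat.ceil_le.2 (div_le_self b.cast_nonneg (by exact_mod_cast (by omega : 1 ≤ m)))
  have hbam : b ≤ a * m := by exact_mod_cast (div_le_iff₀ hm0).1 (Nat.le_ceil ((b : ℝ) / m))
  rw [show (3 : ℝ) = (3 : ℕ) by norm_num, Real.rpow_natCast]
  exact lamB_le_mul_lamB μ ha hab (by exact_mod_cast choose_two_le_pow_three_mul_choose_two ha hbam)
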